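/- arXiv:0709.3887 — 2 statements merged into one kernel-verified Lean document; each statement's English description precedes it below -/
import Mathlib

section
/- (General extended division, Theorem 2, existence form.) For every n ≥ 3 and every word W = w₁·w₂⋯w_k in the extended letters ₐσᵢ^{±1} (a ∈ ℤ/4ℤ, 1 ≤ i ≤ n−1), there exist a word P in the extended generators (no inverses) and a word Q in the extended generators (no inverses) such that the product of W in B_n equals (product of P)·(product of Q)⁻¹, the total length satisfies |P| + |Q| = |W|, the length |P| equals the number of positive letters of W, and the sequence of subscripts i occurring in the letters of P followed by the reversed sequence of subscripts of Q equals a rearrangement matching the sequence of subscripts i of W (W and P·Q⁻¹ have the same sequence of right indices). -/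
namespace Braid

/-- The braid relations on `n` strands: generators `0, …, n-2` stand for `σ₁, …, σ_{n-1}`. -/
def braidRels (n : ℕ) : Set (FreeGroup (Fin (n - 1))) :=
  { r | (∃ i j : Fin (n - 1), (i : ℕ) + 2 ≤ (j : ℕ) ∧
          r = FreeGroup.of i * FreeGroup.of j * (FreeGroup.of i)⁻¹ * (FreeGroup.of j)⁻¹) ∨
        (∃ i j : Fin (n - 1), (j : ℕ) = (i : ℕ) + 1 ∧
          r = FreeGroup.of i * FreeGroup.of j * FreeGroup.of i *
              (FreeGroup.of j * FreeGroup.of i * FreeGroup.of j)⁻¹) }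

/-- The braid group `B_n`, presented by `σ₁, …, σ_{n-1}` and the braid relations. -/
abbrev BraidGroup (n : ℕ) := PresentedGroup (braidRels n)

/-- The standard generator `σ i` of `B_n` (1-indexed); junk value `1` out of range. -/
def s (n : ℕ) (i : ℕ) : BraidGroup n :=
  if h : 1 ≤ i ∧ i ≤ n - 1 then PresentedGroup.of (⟨i - 1, by omega⟩ : Fin (n - 1)) else 1

/-- The Garside half-twist `Δ = (σ₁)(σ₂σ₁)(σ₃σ₂σ₁)⋯(σ_{n-1}σ_{n-2}⋯σ₁)` in `B_n`. -/
def halfTwist (n : ℕ) : BraidGroup n :=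
  ((List.range (n - 1)).map
    (fun r => (((List.range (r + 1)).reverse).map (fun k => s n (k + 1))).prod)).prod

/-- The submonoid of positive braids of `B_n`: the monoid generated by `σ₁, …, σ_{n-1}`. -/
def positive (n : ℕ) : Submonoid (BraidGroup n) :=
  Submonoid.closure (s n '' Set.Icc 1 (n - 1))

/-- The extended generators `ₐσᵢ` of `B_n`:
`₀σᵢ = σᵢ`, `₁σᵢ = Δ·σᵢ⁻¹`, `₂σᵢ = σ_{n-i}`, `₃σᵢ = Δ·σ_{n-i}⁻¹`. -/
def es (n : ℕ) (a : ZMod 4) (i : ℕ) : BraidGroup n :=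
  if a = 0 then s n i
  else if a = 1 then halfTwist n * (s n i)⁻¹
  else if a = 2 then s n (n - i)
  else halfTwist n * (s n (n - i))⁻¹

/-- An extended letter `ₐσᵢ^{e}` is coded as `(a, i, e)`, where `e = true` means
exponent `+1` (a positive letter) and `e = false` means exponent `-1` (a negative letter). -/
abbrev ELetter : Type := ZMod 4 × ℕ × Bool

/-- The element of `B_n` represented by an extended letter. -/
def eletterProd (n : ℕ) (x : ELetter) : BraidGroup n :=
  if x.2.2 then es n x.1 x.2.1 else (es n x.1 x.2.1)⁻¹

/-- The element of `B_n` represented by an extended word. -/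
def eprod (n : ℕ) (W : List ELetter) : BraidGroup n :=
  (W.map (eletterProd n)).prod

/-- The element of `B_n` represented by a positive extended word,
coded as a list of pairs `(a, i)` standing for the letters `ₐσᵢ` (no inverses). -/
def eposProd (n : ℕ) (P : List (ZMod 4 × ℕ)) : BraidGroup n :=
  (P.map (fun x => es n x.1 x.2)).prod

/-- A standard word is a list of pairs `(i, e)` standing for the letters `σᵢ^{±1}`;
this is the element of `B_n` it represents. -/
def sprod (n : ℕ) (V : List (ℕ × Bool)) : BraidGroup n :=
  (V.map (fun x => if x.2 then s n x.1 else (s n x.1)⁻¹)).prod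

/-- The element of `B_n` represented by a positive standard word (a list of indices). -/
def posProd (n : ℕ) (P : List ℕ) : BraidGroup n :=
  (P.map (s n)).prod

/-- The shift `sh(d, ₐσⱼ^{e}) = ₍ₐ₊d₎σⱼ^{f}`, with `f = e` if `d ∈ {0,2}` and
`f = -e` if `d ∈ {1,3}`. -/
def sh (d : ZMod 4) (x : ELetter) : ELetter :=
  (x.1 + d, x.2.1, if d = 0 ∨ d = 2 then x.2.2 else !x.2.2)

/-- One step of the inductive definition of the separation of an extended word. -/
def sepStep (t : List (ZMod 4) × ZMod 4 × List (ZMod 4)) (x : ELetter) :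
    List (ZMod 4) × ZMod 4 × List (ZMod 4) :=
  if x.2.2 = false then (t.1, t.2.1, t.2.2 ++ [-t.2.1])
  else
    match t.2.2 with
    | [] => (t.1 ++ [0], t.2.1, [])
    | a :: L'' => (t.1 ++ [a + t.2.1 + 1], t.2.1 + 2, L'' ++ [3 - t.2.1])

/-- The separation `(L, δ, L')` of an extended word, defined inductively from the left. -/
def separation (W : List ELetter) : List (ZMod 4) × ZMod 4 × List (ZMod 4) :=
  W.foldl sepStep ([], 0, [])

/-- The bishift `SH2(L, δ, L', W)`: the first `|L|` letters of `W` are shifted by the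
entries of `L`, the remaining letters are shifted by `δ +` the entries of `L'`. -/
def SH2 (L : List (ZMod 4)) (δ : ZMod 4) (L' : List (ZMod 4)) (W : List ELetter) :
    List ELetter :=
  List.zipWith sh L (W.take L.length) ++
    List.zipWith sh (L'.map (fun d => δ + d)) (W.drop L.length)

/-!
Every extended generator `x = ₐσᵢ` has a complement `x' = ₍ₐ₊₃₎σᵢ` with `x x' = Δ`: for `a = 0, 2`
this is the Garside flip `Δ σᵢ = σ_{n-i} Δ`, for `a = 1, 3` it is immediate. Applying it twice gives
`x Δ = Δ x''`. Read `W` from left to right, keeping its value in the form `P Q⁻¹`. A negative letter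
is prepended to `Q`; a positive letter `x` crosses `Q⁻¹ = q⁻¹ Q₀⁻¹` in one step:
`q⁻¹ Q₀⁻¹ x = q⁻¹ Q₀⁻¹ Δ x'⁻¹ = q⁻¹ Δ Q₀''⁻¹ x'⁻¹ = q' (x' Q₀'')⁻¹`.
Complements keep right indices, so the sequence of right indices is preserved.
-/

end Braid

section Complement

variable {G α β : Type*} [Group G] {e : α → G} {c : α → α} {Δ : G}

def signedWordProd (e : α → G) (W : List (α × Bool)) : G :=
  (W.map fun x => if x.2 then e x.1 else (e x.1)⁻¹).prod

lemma mul_eq_mul_of_mul_complement (he : ∀ x, e x * e (c x) = Δ) (x : α) :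
    e x * Δ = Δ * e (c (c x)) := by
  calc e x * Δ = e x * (e (c x) * e (c (c x))) := by rw [he]
    _ = Δ * e (c (c x)) := by rw [← mul_assoc, he]

lemma list_prod_map_mul_eq_mul_of_mul_complement (he : ∀ x, e x * e (c x) = Δ) (L : List α) :
    (L.map e).prod * Δ = Δ * (L.map (e ∘ c ∘ c)).prod := by
  induction L with
  | nil => simp
  | cons x L ih =>
    simp only [List.map_cons, List.prod_cons, Function.comp_apply]
    rw [mul_assoc, ih, ← mul_assoc, mul_eq_mul_of_mul_complement he, mul_assoc]

lemma inv_prod_append_mul_eq_of_mul_complement (he : ∀ x, e x * e (c x) = Δ) (Q : List α)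
    (q x : α) :
    ((Q ++ [q]).map e).prod⁻¹ * e x = e (c q) * ((c x :: Q.map (c ∘ c)).map e).prod⁻¹ := by
  have hx : e x = Δ * (e (c x))⁻¹ := eq_mul_inv_of_mul_eq (he x)
  have hq : (e q)⁻¹ * Δ = e (c q) := inv_mul_eq_of_eq_mul (he q).symm
  have hQ : (Q.map e).prod⁻¹ * Δ = Δ * (Q.map (e ∘ c ∘ c)).prod⁻¹ := by
    rw [inv_mul_eq_iff_eq_mul, ← mul_assoc, list_prod_map_mul_eq_mul_of_mul_complement he,
      mul_inv_cancel_right]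
  calc ((Q ++ [q]).map e).prod⁻¹ * e x
      = (e q)⁻¹ * ((Q.map e).prod⁻¹ * Δ) * (e (c x))⁻¹ := by
        simp only [hx, List.map_append, List.prod_append, List.map_singleton,
          List.prod_singleton, mul_inv_rev, mul_assoc]
    _ = e (c q) * ((c x :: Q.map (c ∘ c)).map e).prod⁻¹ := by
        simp only [hQ, ← hq, List.map_cons, List.map_map, List.prod_cons, mul_inv_rev, mul_assoc]

lemma signedWordProd_append_singleton (W : List (α × Bool)) (x : α) (b : Bool) :
    signedWordProd e (W ++ [(x, b)]) = signedWordProd e W * if b then e x else (e x)⁻¹ := by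
  simp [signedWordProd]

theorem exists_signedWordProd_eq_mul_inv (he : ∀ x, e x * e (c x) = Δ) (idx : α → β)
    (hidx : ∀ x, idx (c x) = idx x) (W : List (α × Bool)) :
    ∃ P Q : List α, signedWordProd e W = (P.map e).prod * (Q.map e).prod⁻¹ ∧
      P.length = W.countP (fun x => x.2) ∧
      P.map idx ++ (Q.map idx).reverse = W.map (fun x => idx x.1) := by
  induction W using List.reverseRecOn with
  | nil => exact ⟨[], [], by simp [signedWordProd], rfl, rfl⟩
  | append_singleton W x ih =>
    obtain ⟨P, Q, hprod, hcount, hidxs⟩ := ih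
    obtain ⟨x, _ | _⟩ := x
    · refine ⟨P, x :: Q, ?_, by simpa using hcount, by simp [← hidxs]⟩
      simp [signedWordProd_append_singleton, hprod, mul_assoc]
    · rcases Q.eq_nil_or_concat' with rfl | ⟨Q, q, rfl⟩
      · refine ⟨P ++ [x], [], ?_, by simpa using hcount, by simpa using hidxs⟩
        simp [signedWordProd_append_singleton, hprod]
      · refine ⟨P ++ [c q], c x :: Q.map (c ∘ c), ?_, by simpa using hcount, ?_⟩
        · rw [signedWordProd_append_singleton, hprod, mul_assoc, if_pos rfl,
            inv_prod_append_mul_eq_of_mul_complement he]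
          simp [mul_assoc]
        · simp [hidx, ← hidxs]

end Complement

namespace Braid

lemma s_eq_one_of_not_mem {n i : ℕ} (h : ¬(1 ≤ i ∧ i ≤ n - 1)) : s n i = 1 := dif_neg h

lemma commute_s_s {n p q : ℕ} (h : p + 2 ≤ q) : Commute (s n p) (s n q) := by
  unfold s
  split_ifs with hp hq
  · exact PresentedGroup.mk_eq_mk_of_mul_inv_mem
      (Or.inl ⟨⟨p - 1, by omega⟩, ⟨q - 1, by omega⟩, by simp only; omega, by group⟩)
  all_goals simp

lemma s_braid {n p : ℕ} (hp : 1 ≤ p) (hpn : p + 1 ≤ n - 1) :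
    s n p * s n (p + 1) * s n p = s n (p + 1) * s n p * s n (p + 1) := by
  rw [s, s, dif_pos ⟨hp, by omega⟩, dif_pos ⟨by omega, hpn⟩]
  exact PresentedGroup.mk_eq_mk_of_mul_inv_mem
    (Or.inr ⟨⟨p - 1, by omega⟩, ⟨p + 1 - 1, by omega⟩, by simp only; omega, rfl⟩)

def descBraid (n m : ℕ) : BraidGroup n :=
  ((List.range m).reverse.map fun k => s n (k + 1)).prod

def ascBraid (n m : ℕ) : BraidGroup n :=
  ((List.range m).map fun k => s n (k + 1)).prod

/-- The half twist of the first `m + 1` strands. -/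
def halfTwistOn (n m : ℕ) : BraidGroup n :=
  ((List.range m).map fun r => descBraid n (r + 1)).prod

lemma descBraid_succ (n m : ℕ) : descBraid n (m + 1) = s n (m + 1) * descBraid n m := by
  simp [descBraid, List.range_succ]

lemma ascBraid_succ (n m : ℕ) : ascBraid n (m + 1) = ascBraid n m * s n (m + 1) := by
  simp [ascBraid, List.range_succ]

lemma halfTwistOn_succ (n m : ℕ) :
    halfTwistOn n (m + 1) = halfTwistOn n m * descBraid n (m + 1) := by
  simp [halfTwistOn, List.range_succ]

lemma halfTwist_eq_halfTwistOn (n : ℕ) : halfTwist n = halfTwistOn n (n - 1) := rfl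

lemma commute_s_descBraid {n m p : ℕ} (h : m + 2 ≤ p) : Commute (s n p) (descBraid n m) :=
  Commute.list_prod_right _ _ <| by
    simp only [List.mem_map, List.mem_reverse, List.mem_range]
    rintro _ ⟨k, hk, rfl⟩
    exact (commute_s_s (by omega)).symm

lemma commute_s_ascBraid {n m p : ℕ} (h : m + 2 ≤ p) : Commute (s n p) (ascBraid n m) :=
  Commute.list_prod_right _ _ <| by
    simp only [List.mem_map, List.mem_range]
    rintro _ ⟨k, hk, rfl⟩
    exact (commute_s_s (by omega)).symm

lemma commute_s_halfTwistOn {n m p : ℕ} (h : m + 2 ≤ p) : Commute (s n p) (halfTwistOn n m) :=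
  Commute.list_prod_right _ _ <| by
    simp only [List.mem_map, List.mem_range]
    rintro _ ⟨r, hr, rfl⟩
    exact commute_s_descBraid (by omega)

lemma descBraid_mul_s {n m i : ℕ} (hi : 1 ≤ i) (him : i < m) (hm : m ≤ n - 1) :
    descBraid n m * s n (i + 1) = s n i * descBraid n m := by
  induction m with
  | zero => omega
  | succ m ih =>
    rw [descBraid_succ]
    rcases Nat.lt_or_ge i m with him' | hmi
    · rw [mul_assoc, ih him' (by omega), ← mul_assoc, ← (commute_s_s (by omega)).eq, mul_assoc]
    · obtain rfl : i = m := by omega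
      obtain ⟨k, rfl⟩ : ∃ k, i = k + 1 := ⟨i - 1, by omega⟩
      rw [descBraid_succ, mul_assoc, mul_assoc, ← (commute_s_descBraid (by omega)).eq]
      simp only [← mul_assoc]
      rw [s_braid hi hm]

lemma ascBraid_mul_s {n m i : ℕ} (hi : 1 ≤ i) (him : i < m) (hm : m ≤ n - 1) :
    ascBraid n m * s n i = s n (i + 1) * ascBraid n m := by
  induction m with
  | zero => omega
  | succ m ih =>
    rw [ascBraid_succ]
    rcases Nat.lt_or_ge i m with him' | hmi
    · rw [mul_assoc, ← (commute_s_s (by omega)).eq, ← mul_assoc, ih him' (by omega), mul_assoc]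
    · obtain rfl : i = m := by omega
      obtain ⟨k, rfl⟩ : ∃ k, i = k + 1 := ⟨i - 1, by omega⟩
      rw [ascBraid_succ]
      simp only [← mul_assoc]
      rw [(commute_s_ascBraid (by omega)).eq]
      simp only [mul_assoc]
      congr 1
      simp only [← mul_assoc]
      exact s_braid hi hm

lemma halfTwistOn_succ_eq_ascBraid_mul (n m : ℕ) :
    halfTwistOn n (m + 1) = ascBraid n (m + 1) * halfTwistOn n m := by
  induction m with
  | zero => simp [halfTwistOn, descBraid, ascBraid]
  | succ m ih =>
    calc halfTwistOn n (m + 1 + 1)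
        = ascBraid n (m + 1) * halfTwistOn n m * (s n (m + 2) * descBraid n (m + 1)) := by
          rw [halfTwistOn_succ, ih, descBraid_succ]
      _ = ascBraid n (m + 1) * s n (m + 2) * (halfTwistOn n m * descBraid n (m + 1)) := by
          rw [mul_assoc, ← mul_assoc (halfTwistOn n m), ← (commute_s_halfTwistOn le_rfl).eq]
          simp only [mul_assoc]
      _ = ascBraid n (m + 1 + 1) * halfTwistOn n (m + 1) := by
          rw [ascBraid_succ n (m + 1), halfTwistOn_succ n m]

lemma halfTwistOn_mul_s {n m i : ℕ} (hi : 1 ≤ i) (him : i ≤ m) (hm : m ≤ n - 1) :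
    halfTwistOn n m * s n i = s n (m + 1 - i) * halfTwistOn n m := by
  induction m generalizing i with
  | zero => omega
  | succ m ih =>
    obtain ⟨j, rfl⟩ : ∃ j, i = j + 1 := ⟨i - 1, by omega⟩
    rcases Nat.eq_zero_or_pos j with rfl | hj
    · rcases Nat.eq_zero_or_pos m with rfl | hm0
      · simp [halfTwistOn, descBraid]
      rw [halfTwistOn_succ_eq_ascBraid_mul, mul_assoc, ih le_rfl hm0 (by omega),
        Nat.add_sub_cancel, ← mul_assoc, ascBraid_mul_s hm0 (by omega) hm, mul_assoc]
      rfl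
    · rw [halfTwistOn_succ, mul_assoc, descBraid_mul_s hj (by omega) hm, ← mul_assoc,
        ih hj (by omega) (by omega), mul_assoc, show m + 1 - j = m + 1 + 1 - (j + 1) by omega]

lemma halfTwist_mul_s (n i : ℕ) : halfTwist n * s n i = s n (n - i) * halfTwist n := by
  by_cases hi : 1 ≤ i ∧ i ≤ n - 1
  · rw [halfTwist_eq_halfTwistOn, halfTwistOn_mul_s hi.1 hi.2 le_rfl,
      show n - 1 + 1 - i = n - i by omega]
  · -- out of range, `s n i` and `s n (n - i)` are both the junk value `1`
    rw [s_eq_one_of_not_mem hi, s_eq_one_of_not_mem (by omega : ¬(1 ≤ n - i ∧ n - i ≤ n - 1))]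
    group

lemma halfTwist_mul_s_sub (n i : ℕ) : halfTwist n * s n (n - i) = s n i * halfTwist n := by
  rw [halfTwist_mul_s]
  by_cases hi : i ≤ n
  · rw [Nat.sub_sub_self hi]
  · rw [s_eq_one_of_not_mem (by omega : ¬(1 ≤ n - (n - i) ∧ n - (n - i) ≤ n - 1)),
      s_eq_one_of_not_mem (by omega : ¬(1 ≤ i ∧ i ≤ n - 1))]

lemma es_mul_es_add_three (n : ℕ) (a : ZMod 4) (i : ℕ) :
    es n a i * es n (a + 3) i = halfTwist n := by
  obtain rfl | rfl | rfl | rfl : a = 0 ∨ a = 1 ∨ a = 2 ∨ a = 3 := by revert a; decide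
  all_goals simp +decide only [es, ite_true, ite_false, inv_mul_cancel_right]
  · rw [← mul_assoc, ← halfTwist_mul_s_sub, mul_inv_cancel_right]
  · rw [← mul_assoc, ← halfTwist_mul_s, mul_inv_cancel_right]

theorem general_extended_division_general (n : ℕ) (W : List ELetter)
    (hW : ∀ x ∈ W, 1 ≤ x.2.1 ∧ x.2.1 ≤ n - 1) :
    ∃ P Q : List (ZMod 4 × ℕ),
      (∀ y ∈ P, 1 ≤ y.2 ∧ y.2 ≤ n - 1) ∧
      (∀ y ∈ Q, 1 ≤ y.2 ∧ y.2 ≤ n - 1) ∧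
      eprod n W = eposProd n P * (eposProd n Q)⁻¹ ∧
      P.length + Q.length = W.length ∧
      P.length = W.countP (fun x => x.2.2) ∧
      P.map Prod.snd ++ (Q.map Prod.snd).reverse = W.map (fun x => x.2.1) := by
  obtain ⟨P, Q, hprod, hcount, hidx⟩ := exists_signedWordProd_eq_mul_inv
    (e := fun y : ZMod 4 × ℕ => es n y.1 y.2) (c := fun y => (y.1 + 3, y.2))
    (fun y => es_mul_es_add_three n y.1 y.2) Prod.snd (fun _ => rfl)
    (W.map fun x => ((x.1, x.2.1), x.2.2))
  simp only [signedWordProd, List.map_map, List.countP_map, Function.comp_def]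
    at hprod hidx hcount
  have hbound : ∀ k ∈ P.map Prod.snd ++ (Q.map Prod.snd).reverse, 1 ≤ k ∧ k ≤ n - 1 := by
    rw [hidx, List.forall_mem_map]
    exact fun x hx => hW x hx
  refine ⟨P, Q, fun y hy => hbound y.2 (List.mem_append_left _ (List.mem_map_of_mem hy)),
    fun y hy => hbound y.2 (List.mem_append_right _ (List.mem_reverse.2 (List.mem_map_of_mem hy))),
    hprod, by simpa using congrArg List.length hidx, hcount, hidx⟩

/-- General extended division (Theorem 2, existence form): every extended word `W`
of `B_n` is equivalent to `P·Q⁻¹` with `P, Q` positive extended words, where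
`|P| + |Q| = |W|`, `|P|` is the number of positive letters of `W`, and `W` and
`P·Q⁻¹` have the same sequence of right indices. -/
theorem general_extended_division (n : ℕ) (hn : 3 ≤ n) (W : List ELetter)
    (hW : ∀ x ∈ W, 1 ≤ x.2.1 ∧ x.2.1 ≤ n - 1) :
    ∃ P Q : List (ZMod 4 × ℕ),
      (∀ y ∈ P, 1 ≤ y.2 ∧ y.2 ≤ n - 1) ∧
      (∀ y ∈ Q, 1 ≤ y.2 ∧ y.2 ≤ n - 1) ∧
      eprod n W = eposProd n P * (eposProd n Q)⁻¹ ∧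
      P.length + Q.length = W.length ∧
      P.length = W.countP (fun x => x.2.2) ∧
      P.map Prod.snd ++ (Q.map Prod.snd).reverse = W.map (fun x => x.2.1) :=
  general_extended_division_general n W hW

end Braid
end

section
/- (Symmetric standard division.) For every n ≥ 3 and every word V in the letters σ₁^{±1},…,σ_{n−1}^{±1}, there exist positive standard words P and Q such that the product of V in B_n equals (product of Q)⁻¹·(product of P). -/
namespace Braid

/-!
Let `δ = σ₁σ₂⋯σ_{n-1}`. Conjugation by `δ` shifts `σᵢ` to `σᵢ₊₁` for `i < n - 1`,
and `δ²` sends `σ_{n-1}` to `σ₁`; hence `θ = δⁿ` is a positive braid commuting with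
every `σᵢ`. Moreover `θ σᵢ⁻¹ = δⁱ (σ₁⋯σ_{n-2}) δ^{n-1-i}` is positive. Replacing each
negative letter `σᵢ⁻¹` of `V` by `θ⁻¹ (θ σᵢ⁻¹)` and pushing the central factors `θ⁻¹`
to the left gives `V = θ⁻ᵗ P` with `P` positive.
-/

section Fractions

variable {G : Type*} [Group G] {M : Submonoid G} {S : Set G} {θ : G}

theorem exists_pow_mul_mem_of_mem_closure (hSM : S ⊆ M) (hcomm : ∀ x ∈ S, Commute θ x)
    (hinv : ∀ x ∈ S, θ * x⁻¹ ∈ M) {g : G} (hg : g ∈ Subgroup.closure S) :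
    ∃ t : ℕ, θ ^ t * g ∈ M := by
  have hcent : Subgroup.closure S ≤ Subgroup.centralizer {θ} :=
    (Subgroup.closure_le _).2 fun x hx => Subgroup.mem_centralizer_singleton_iff.2 (hcomm x hx).symm
  induction hg using Subgroup.closure_induction'' with
  | mem x hx => exact ⟨0, by simpa using hSM hx⟩
  | inv_mem x hx => exact ⟨1, by simpa using hinv x hx⟩
  | one => exact ⟨0, by simp⟩
  | mul x y hx _ ihx ihy =>
    obtain ⟨a, hxa⟩ := ihx
    obtain ⟨b, hyb⟩ := ihy
    have hθx : Commute (θ ^ b) x :=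
      Commute.pow_left (Subgroup.mem_centralizer_singleton_iff.1 (hcent hx)).symm b
    refine ⟨a + b, ?_⟩
    rw [pow_add, mul_assoc, ← mul_assoc (θ ^ b), hθx.eq, mul_assoc, ← mul_assoc]
    exact M.mul_mem hxa hyb

theorem exists_inv_mul_eq_of_mem_closure (hSM : S ⊆ M) (hθ : θ ∈ M)
    (hcomm : ∀ x ∈ S, Commute θ x) (hinv : ∀ x ∈ S, θ * x⁻¹ ∈ M) {g : G}
    (hg : g ∈ Subgroup.closure S) : ∃ q ∈ M, ∃ p ∈ M, q⁻¹ * p = g := by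
  obtain ⟨t, ht⟩ := exists_pow_mul_mem_of_mem_closure hSM hcomm hinv hg
  exact ⟨θ ^ t, M.pow_mem hθ t, _, ht, inv_mul_cancel_left _ _⟩

end Fractions

section Relations

variable {n : ℕ}

lemma mk_eq_one_of_mem_braidRels {r : FreeGroup (Fin (n - 1))} (h : r ∈ braidRels n) :
    (QuotientGroup.mk r : BraidGroup n) = 1 :=
  (QuotientGroup.eq_one_iff r).mpr (Subgroup.subset_normalClosure h)

lemma of_commute {a b : Fin (n - 1)} (hab : (a : ℕ) + 2 ≤ b) :
    Commute (PresentedGroup.of a : BraidGroup n) (PresentedGroup.of b) := by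
  have h := mk_eq_one_of_mem_braidRels (Or.inl ⟨a, b, hab, rfl⟩)
  simp only [QuotientGroup.mk_mul, QuotientGroup.mk_inv] at h
  rwa [mul_inv_eq_one, mul_inv_eq_iff_eq_mul] at h

lemma of_braid {a b : Fin (n - 1)} (hab : (b : ℕ) = a + 1) :
    (PresentedGroup.of a : BraidGroup n) * PresentedGroup.of b * PresentedGroup.of a
      = PresentedGroup.of b * PresentedGroup.of a * PresentedGroup.of b := by
  have h := mk_eq_one_of_mem_braidRels (Or.inr ⟨a, b, hab, rfl⟩)
  simp only [QuotientGroup.mk_mul, QuotientGroup.mk_inv] at h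
  rwa [mul_inv_eq_one] at h

lemma s_commute {i j : ℕ} (hi : 1 ≤ i) (hij : i + 2 ≤ j) (hj : j ≤ n - 1) :
    Commute (s n i) (s n j) := by
  rw [s, s, dif_pos ⟨hi, by omega⟩, dif_pos ⟨by omega, hj⟩]
  exact of_commute (by simp only; omega)

lemma s_braid_s11 {i : ℕ} (hi : 1 ≤ i) (hin : i + 1 ≤ n - 1) :
    s n i * s n (i + 1) * s n i = s n (i + 1) * s n i * s n (i + 1) := by
  rw [s, s, dif_pos ⟨hi, by omega⟩, dif_pos ⟨by omega, hin⟩]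
  exact of_braid (by simp only; omega)

lemma s_mem_positive {i : ℕ} (hi : 1 ≤ i) (hin : i ≤ n - 1) : s n i ∈ positive n :=
  Submonoid.subset_closure ⟨i, ⟨hi, hin⟩, rfl⟩

lemma posProd_mem_positive {P : List ℕ} (hP : ∀ k ∈ P, 1 ≤ k ∧ k ≤ n - 1) :
    posProd n P ∈ positive n :=
  Submonoid.list_prod_mem _ <| by
    simpa only [List.forall_mem_map] using fun k hk => s_mem_positive (hP k hk).1 (hP k hk).2

lemma exists_posProd_eq_of_mem_positive {x : BraidGroup n} (hx : x ∈ positive n) :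
    ∃ P : List ℕ, (∀ k ∈ P, 1 ≤ k ∧ k ≤ n - 1) ∧ posProd n P = x := by
  induction hx using Submonoid.closure_induction with
  | mem _ hx =>
    obtain ⟨k, hk, rfl⟩ := hx
    exact ⟨[k], by simpa using hk, by simp [posProd]⟩
  | one => exact ⟨[], by simp, rfl⟩
  | mul _ _ _ _ ihx ihy =>
    obtain ⟨P, hP, rfl⟩ := ihx
    obtain ⟨Q, hQ, rfl⟩ := ihy
    refine ⟨P ++ Q, fun k hk => ?_, by simp [posProd]⟩
    rcases List.mem_append.1 hk with hk | hk
    exacts [hP k hk, hQ k hk]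

lemma sprod_mem_closure {V : List (ℕ × Bool)} (hV : ∀ x ∈ V, 1 ≤ x.1 ∧ x.1 ≤ n - 1) :
    sprod n V ∈ Subgroup.closure (s n '' Set.Icc 1 (n - 1)) := by
  refine Subgroup.list_prod_mem _ (List.forall_mem_map.2 fun x hx => ?_)
  have hs : s n x.1 ∈ Subgroup.closure (s n '' Set.Icc 1 (n - 1)) :=
    Subgroup.subset_closure ⟨x.1, hV x hx, rfl⟩
  split
  exacts [hs, inv_mem hs]

end Relations

def sigmaProd (n k : ℕ) : BraidGroup n :=
  posProd n (List.range' 1 k)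

section SigmaProd

variable {n : ℕ}

lemma sigmaProd_succ (k : ℕ) : sigmaProd n (k + 1) = sigmaProd n k * s n (k + 1) := by
  simp [sigmaProd, posProd, List.range'_concat, add_comm]

lemma sigmaProd_one : sigmaProd n 1 = s n 1 := by
  simp [sigmaProd, posProd]

lemma sigmaProd_mem_positive {k : ℕ} (hk : k ≤ n - 1) : sigmaProd n k ∈ positive n :=
  posProd_mem_positive fun j hj => by simp only [List.mem_range'_1] at hj; omega

lemma sigmaProd_commute_s {m j : ℕ} (hmj : m + 2 ≤ j) (hj : j ≤ n - 1) :
    Commute (sigmaProd n m) (s n j) :=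
  Commute.list_prod_left _ _ <| List.forall_mem_map.2 fun i hi => by
    simp only [List.mem_range'_1] at hi
    exact s_commute (by omega) (by omega) hj

lemma sigmaProd_semiconjBy_s {i k : ℕ} (hi : 1 ≤ i) (hik : i < k) (hk : k ≤ n - 1) :
    SemiconjBy (sigmaProd n k) (s n i) (s n (i + 1)) := by
  induction k with
  | zero => omega
  | succ k ih =>
    rw [sigmaProd_succ]
    rcases Nat.lt_or_ge i k with hik' | hik'
    · exact (ih hik' (by omega)).mul_left (s_commute hi (by omega) hk).symm
    · obtain rfl : k = i := by omega
      obtain ⟨m, rfl⟩ : ∃ m, k = m + 1 := ⟨k - 1, by omega⟩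
      have hbraid :
          SemiconjBy (s n (m + 1) * s n (m + 1 + 1)) (s n (m + 1)) (s n (m + 1 + 1)) := by
        simpa only [SemiconjBy, mul_assoc] using s_braid_s11 (n := n) (i := m + 1) (by omega) hk
      rw [sigmaProd_succ, mul_assoc]
      exact SemiconjBy.mul_left (sigmaProd_commute_s le_rfl hk) hbraid

lemma sigmaProd_sq_succ {k : ℕ} (hk : 1 ≤ k) (hkn : k + 1 ≤ n - 1) :
    sigmaProd n (k + 1) ^ 2 = sigmaProd n k ^ 2 * (s n (k + 1) * s n k) := by
  obtain ⟨m, rfl⟩ : ∃ m, k = m + 1 := ⟨k - 1, by omega⟩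
  set e := sigmaProd n m
  set a := s n (m + 1)
  set b := s n (m + 1 + 1)
  have hbe : b * e = e * b := (sigmaProd_commute_s le_rfl hkn).symm.eq
  have hbraid : a * b * a = b * a * b := s_braid_s11 (by omega) hkn
  rw [sq, sq, sigmaProd_succ (m + 1), sigmaProd_succ m]
  calc e * a * b * (e * a * b) = e * a * (b * e) * a * b := by group
    _ = e * a * e * (b * a * b) := by rw [hbe]; group
    _ = e * a * (e * a) * (b * a) := by rw [← hbraid]; group

lemma sigmaProd_sq_semiconjBy_s {k : ℕ} (hk : 1 ≤ k) (hkn : k ≤ n - 1) :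
    SemiconjBy (sigmaProd n k ^ 2) (s n k) (s n 1) := by
  induction k, hk using Nat.le_induction with
  | base =>
    rw [sigmaProd_one]
    exact (Commute.refl _).pow_left 2
  | succ k hk ih =>
    have hbraid : SemiconjBy (s n (k + 1) * s n k) (s n (k + 1)) (s n k) := by
      simpa only [SemiconjBy, mul_assoc] using (s_braid_s11 (n := n) hk hkn).symm
    rw [sigmaProd_sq_succ hk hkn]
    exact (ih (by omega)).mul_left hbraid

lemma sigmaProd_pow_semiconjBy_s {i : ℕ} (hi : 1 ≤ i) (m : ℕ) (him : i + m ≤ n - 1) :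
    SemiconjBy (sigmaProd n (n - 1) ^ m) (s n i) (s n (i + m)) := by
  induction m with
  | zero => simp
  | succ m ih =>
    rw [pow_succ']
    exact (sigmaProd_semiconjBy_s (i := i + m) (by omega) (by omega) le_rfl).mul_left
      (ih (by omega))

lemma sigmaProd_pow_commute_s {i : ℕ} (hi : 1 ≤ i) (hin : i ≤ n - 1) :
    Commute (sigmaProd n (n - 1) ^ n) (s n i) := by
  set δ := sigmaProd n (n - 1)
  have hup := sigmaProd_pow_semiconjBy_s (n := n) hi (n - 1 - i) (by omega)
  have hwrap := sigmaProd_sq_semiconjBy_s (n := n) (k := n - 1) (by omega) le_rfl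
  have hback := sigmaProd_pow_semiconjBy_s (n := n) le_rfl (i - 1) (by omega)
  rw [Nat.add_sub_of_le (by omega : i ≤ n - 1)] at hup
  rw [Nat.add_sub_of_le hi] at hback
  have hsplit : δ ^ n = δ ^ (i - 1) * (δ ^ 2 * δ ^ (n - 1 - i)) := by
    rw [← pow_add, ← pow_add]; congr 1; omega
  rw [hsplit]
  exact hback.mul_left (hwrap.mul_left hup)

lemma sigmaProd_pow_mul_s_inv_mem_positive {i : ℕ} (hi : 1 ≤ i) (hin : i ≤ n - 1) :
    sigmaProd n (n - 1) ^ n * (s n i)⁻¹ ∈ positive n := by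
  set δ := sigmaProd n (n - 1)
  have hup : δ ^ (n - 1 - i) * (s n i)⁻¹ = (s n (n - 1))⁻¹ * δ ^ (n - 1 - i) := by
    have h := (sigmaProd_pow_semiconjBy_s (n := n) hi (n - 1 - i) (by omega)).inv_right
    rwa [Nat.add_sub_of_le (by omega : i ≤ n - 1)] at h
  have hδ : δ * (s n (n - 1))⁻¹ = sigmaProd n (n - 2) := by
    rw [mul_inv_eq_iff_eq_mul]
    simpa only [show n - 2 + 1 = n - 1 by omega] using sigmaProd_succ (n := n) (n - 2)
  have hsplit : δ ^ n = δ ^ i * (δ * δ ^ (n - 1 - i)) := by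
    rw [← pow_succ', ← pow_add]; congr 1; omega
  have hpos : δ ∈ positive n := sigmaProd_mem_positive le_rfl
  rw [hsplit, mul_assoc, mul_assoc, hup, ← mul_assoc δ, hδ]
  exact mul_mem (pow_mem hpos _) (mul_mem (sigmaProd_mem_positive (by omega)) (pow_mem hpos _))

end SigmaProd

theorem symmetric_standard_division_general (n : ℕ) (V : List (ℕ × Bool))
    (hV : ∀ x ∈ V, 1 ≤ x.1 ∧ x.1 ≤ n - 1) :
    ∃ P Q : List ℕ,
      (∀ k ∈ P, 1 ≤ k ∧ k ≤ n - 1) ∧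
      (∀ k ∈ Q, 1 ≤ k ∧ k ≤ n - 1) ∧
      sprod n V = (posProd n Q)⁻¹ * posProd n P := by
  obtain ⟨q, hq, p, hp, hqp⟩ := exists_inv_mul_eq_of_mem_closure (M := positive n)
    (θ := sigmaProd n (n - 1) ^ n) Submonoid.subset_closure
    (pow_mem (sigmaProd_mem_positive le_rfl) n)
    (by rintro _ ⟨i, hi, rfl⟩; exact sigmaProd_pow_commute_s hi.1 hi.2)
    (by rintro _ ⟨i, hi, rfl⟩; exact sigmaProd_pow_mul_s_inv_mem_positive hi.1 hi.2)
    (sprod_mem_closure hV)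
  obtain ⟨P, hP, rfl⟩ := exists_posProd_eq_of_mem_positive hp
  obtain ⟨Q, hQ, rfl⟩ := exists_posProd_eq_of_mem_positive hq
  exact ⟨P, Q, hP, hQ, hqp.symm⟩

/-- Symmetric standard division: every standard word `V` of `B_n` is equivalent to
`Q⁻¹·P` with `P, Q` positive standard words. -/
theorem symmetric_standard_division (n : ℕ) (hn : 3 ≤ n) (V : List (ℕ × Bool))
    (hV : ∀ x ∈ V, 1 ≤ x.1 ∧ x.1 ≤ n - 1) :
    ∃ P Q : List ℕ,
      (∀ k ∈ P, 1 ≤ k ∧ k ≤ n - 1) ∧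
      (∀ k ∈ Q, 1 ≤ k ∧ k ≤ n - 1) ∧
      sprod n V = (posProd n Q)⁻¹ * posProd n P :=
  symmetric_standard_division_general n V hV

end Braid
end
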